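/- arXiv:2410.06909 — 2 statements merged into one kernel-verified Lean document; each statement's English description precedes it below -/
import Mathlib

section
/- Let E and F be pseudo-normed real vector spaces, let s_0 < s < s_1 be real numbers, q ∈ [1,∞], r > 0, and let Φ : B_{s,q}(0,r) → Σ^{s_0}_∞(F) satisfy the weak Lipschitz and tame estimates. Then the mapping Φ : B_{s,q}(0,r) → Σ^s_q(F) is continuous, where B_{s,q}(0,r) carries the distance d(v,w) = ‖v−w‖_{Σ^s_q(E)} and Σ^s_q(F) carries the distance d(f,g) = ‖f−g‖_{Σ^s_q(F)}. -/
open Filter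
open scoped ENNReal NNReal

/-- A pseudo-norm on a real vector space: nonnegative, symmetric, subadditive,
and vanishing exactly at `0`. -/
structure IsPseudoNorm {E : Type*} [AddCommGroup E] [Module ℝ E] (N : E → ℝ) : Prop where
  nonneg : ∀ x, 0 ≤ N x
  neg : ∀ x, N (-x) = N x
  add_le : ∀ x y, N (x + y) ≤ N x + N y
  eq_zero_iff : ∀ x, N x = 0 ↔ x = 0

/-- The `Σ^s_q(E)` pseudo-norm of a sequence `f : ℕ → E`:
`(∑_k 2^{qks} ‖f_k‖_E^q)^{1/q}` for `q < ∞` and `sup_k 2^{ks} ‖f_k‖_E` for `q = ∞`. -/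
noncomputable def sigmaNorm {E : Type*} (N : E → ℝ) (s : ℝ) (q : ℝ≥0∞) (f : ℕ → E) : ℝ≥0∞ :=
  if q = ⊤ then ⨆ k : ℕ, ENNReal.ofReal ((2 : ℝ) ^ ((k : ℝ) * s) * N (f k))
  else (∑' k : ℕ, ENNReal.ofReal ((2 : ℝ) ^ ((k : ℝ) * s) * N (f k)) ^ q.toReal) ^ (1 / q.toReal)

/-- Membership in `Σ^s_q(E)`: finiteness of the norm when `q < ∞`, and
`2^{ks}‖f_k‖_E → 0` when `q = ∞`. -/
def memSigma {E : Type*} (N : E → ℝ) (s : ℝ) (q : ℝ≥0∞) (f : ℕ → E) : Prop :=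
  if q = ⊤ then Tendsto (fun k : ℕ => (2 : ℝ) ^ ((k : ℝ) * s) * N (f k)) atTop (nhds 0)
  else sigmaNorm N s q f < ⊤

/-- Friedrichs smoothing operator `S_n`: truncation of a sequence after index `n`. -/
def smoothS {E : Type*} [Zero E] (n : ℕ) (f : ℕ → E) : ℕ → E :=
  fun k => if k ≤ n then f k else 0

open MeasureTheory Topology Set

/-!
Write `w_k(v) = 2^{ks} ‖v_k‖` for the weights of a sequence `v`. Splitting `v` at frequency `k`
with the smoothing operator `S_k`, the weak Lipschitz estimate controls `Φ v - Φ (S_k v)` and the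
tame estimate controls `Φ (S_k v)`; together they give `w_k(Φ v) ≤ (C₀ + C₁) ∑_j κ(k, j) w_j(v)`
for the two-sided geometric kernel `κ(k, j) = 2^{-(s - s₀)(j - k)⁺ - (s₁ - s)(k - j)⁺}`, which is
bounded on `ℓ^q` by Schur's test. For `g` near `f`, the frequencies `k < n` of `Φ g - Φ f` are
controlled by the weak Lipschitz estimate alone, with a constant depending on `n`, and the
frequencies `k ≥ n` by `κ w(g - f)` plus twice the part beyond `n` of `κ w(f)`, which tends to `0`
as `n → ∞` because `f ∈ Σ^s_q`.
-/

lemma ENNReal.rpow_eq_rpow_sub_one_mul {p : ℝ} (hp : 1 ≤ p) (x : ℝ≥0∞) :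
    x ^ p = x ^ (p - 1) * x := by
  conv_lhs => rw [show p = (p - 1) + 1 by ring]
  rw [ENNReal.rpow_add_of_nonneg _ _ (by linarith) zero_le_one, ENNReal.rpow_one]

lemma ENNReal.tsum_mul_le_weight_mul_tsum_rpow {α : Type*} {p : ℝ} (hp : 1 ≤ p)
    (w f : α → ℝ≥0∞) :
    ∑' a, w a * f a ≤ (∑' a, w a) ^ (1 - p⁻¹) * (∑' a, w a * f a ^ p) ^ p⁻¹ := by
  have hp₁ : 0 ≤ 1 - p⁻¹ := sub_nonneg.2 (inv_le_one_of_one_le₀ hp)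
  rw [ENNReal.tsum_eq_iSup_sum]
  refine iSup_le fun s => (ENNReal.inner_le_weight_mul_Lp_of_nonneg s hp w f).trans ?_
  gcongr <;> exact ENNReal.sum_le_tsum s

lemma ENNReal.one_le_toReal {q : ℝ≥0∞} (hq : 1 ≤ q) (hq_top : q ≠ ∞) : 1 ≤ q.toReal := by
  simpa using ENNReal.toReal_mono hq_top hq

lemma ENNReal.two_rpow_neg_pow (θ : ℝ) (n : ℕ) : ((2 : ℝ≥0∞) ^ (-θ)) ^ n = 2 ^ (-(n * θ)) := by
  rw [← ENNReal.rpow_mul_natCast]; ring_nf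

lemma ENNReal.tsum_indicator_Ici (f : ℕ → ℝ≥0∞) (n : ℕ) :
    ∑' k, (Ici n).indicator f k = ∑' i, f (i + n) := by
  rw [← (add_left_injective n).tsum_eq]
  · exact tsum_congr fun i => indicator_of_mem (by simp) f
  · intro k hk
    exact ⟨k - n, Nat.sub_add_cancel (by simpa using support_indicator_subset hk)⟩

lemma ENNReal.tendsto_tsum_indicator_Ici {f : ℕ → ℝ≥0∞} (hf : ∑' k, f k ≠ ∞) :
    Tendsto (fun n => ∑' k, (Ici n).indicator f k) atTop (𝓝 0) := by
  simpa only [ENNReal.tsum_indicator_Ici] using ENNReal.tendsto_sum_nat_add f hf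

lemma exists_pos_forall_lt_of_le_mul_add {α : Type*} {S : Set α} {d w : α → ℝ≥0∞}
    {A B : ℕ → ℝ≥0∞} (hA : ∀ n, A n ≠ ∞) (hB : Tendsto B atTop (𝓝 0))
    (h : ∀ n, ∀ x ∈ S, d x ≤ A n * w x + B n) {ε : ℝ} (hε : 0 < ε) :
    ∃ δ : ℝ, 0 < δ ∧ ∀ x ∈ S, w x < ENNReal.ofReal δ → d x < ENNReal.ofReal ε := by
  obtain ⟨n, hn⟩ := (hB.eventually (gt_mem_nhds (ENNReal.ofReal_pos.2 (half_pos hε)))).exists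
  set a := (A n).toReal
  have ha : 0 ≤ a := ENNReal.toReal_nonneg
  refine ⟨ε / 2 / (a + 1), by positivity, fun x hx hwx => ?_⟩
  have hAw : A n * w x ≤ ENNReal.ofReal (ε / 2) :=
    calc A n * w x ≤ ENNReal.ofReal a * ENNReal.ofReal (ε / 2 / (a + 1)) := by
          rw [ENNReal.ofReal_toReal (hA n)]; gcongr
      _ = ENNReal.ofReal (ε / 2 * (a / (a + 1))) := by
          rw [← ENNReal.ofReal_mul ha]; ring_nf
      _ ≤ ENNReal.ofReal (ε / 2) := by
          gcongr
          exact mul_le_of_le_one_right (by positivity)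
            (div_le_one_of_le₀ (by linarith) (by positivity))
  calc d x ≤ A n * w x + B n := h n x hx
    _ < ENNReal.ofReal (ε / 2) + ENNReal.ofReal (ε / 2) :=
        ENNReal.add_lt_add_of_le_of_lt (ne_top_of_le_ne_top ENNReal.ofReal_ne_top hAw) hAw hn
    _ = ENNReal.ofReal ε := by rw [← ENNReal.ofReal_add (by positivity) (by positivity)]; ring_nf

section CountingMeasure

variable {α β : Type*} [MeasurableSpace α] {q : ℝ≥0∞}

lemma eLpNorm_mono_ennreal {μ : Measure α} {u v : α → ℝ≥0∞} (h : ∀ a, u a ≤ v a) :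
    eLpNorm u q μ ≤ eLpNorm v q μ :=
  eLpNorm_mono_enorm (by simpa using h)

variable [MeasurableSingletonClass α]

lemma eLpNorm_count_eq_tsum (u : α → ℝ≥0∞) (hq₀ : q ≠ 0) (hq : q ≠ ∞) :
    eLpNorm u q .count = (∑' a, u a ^ q.toReal) ^ (1 / q.toReal) := by
  simp [eLpNorm_eq_lintegral_rpow_enorm_toReal hq₀ hq, lintegral_count]

lemma eLpNorm_count_top (u : α → ℝ≥0∞) : eLpNorm u ∞ .count = ⨆ a, u a := by
  simp

lemma eLpNorm_count_le_tsum (hq : 1 ≤ q) (u : α → ℝ≥0∞) : eLpNorm u q .count ≤ ∑' a, u a := by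
  rcases eq_or_ne q ∞ with rfl | hq_top
  · rw [eLpNorm_count_top]
    exact iSup_le ENNReal.le_tsum
  have hp := ENNReal.one_le_toReal hq hq_top
  rw [eLpNorm_count_eq_tsum u (by positivity) hq_top, one_div,
    ENNReal.rpow_inv_le_iff (by positivity)]
  calc ∑' a, u a ^ q.toReal = ∑' a, u a ^ (q.toReal - 1) * u a := by
        simp_rw [← ENNReal.rpow_eq_rpow_sub_one_mul hp]
    _ ≤ ∑' a, (∑' b, u b) ^ (q.toReal - 1) * u a := by
        gcongr with a
        exact ENNReal.le_tsum a
    _ = (∑' a, u a) ^ q.toReal := by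
        rw [ENNReal.tsum_mul_left, ← ENNReal.rpow_eq_rpow_sub_one_mul hp]

/-- Schur's test. -/
lemma eLpNorm_count_tsum_mul_le [MeasurableSpace β] [MeasurableSingletonClass β] (hq : 1 ≤ q)
    {κ : α → β → ℝ≥0∞} {D : ℝ≥0∞} (hrow : ∀ a, ∑' b, κ a b ≤ D) (hcol : ∀ b, ∑' a, κ a b ≤ D)
    (u : β → ℝ≥0∞) :
    eLpNorm (fun a => ∑' b, κ a b * u b) q .count ≤ D * eLpNorm u q .count := by
  rcases eq_or_ne q ∞ with rfl | hq_top
  · simp only [eLpNorm_count_top]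
    refine iSup_le fun a => ?_
    calc ∑' b, κ a b * u b ≤ ∑' b, κ a b * ⨆ b', u b' := by
          gcongr with b; exact le_iSup u b
      _ ≤ D * ⨆ b, u b := by rw [ENNReal.tsum_mul_right]; gcongr; exact hrow a
  have hq₀ : q ≠ 0 := (zero_lt_one.trans_le hq).ne'
  have hp := ENNReal.one_le_toReal hq hq_top
  set p := q.toReal
  have hp₀ : 0 < p := by positivity
  have hrow_pow (a : α) :
      (∑' b, κ a b * u b) ^ p ≤ D ^ (p - 1) * ∑' b, κ a b * u b ^ p :=
    calc (∑' b, κ a b * u b) ^ p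
        ≤ ((∑' b, κ a b) ^ (1 - p⁻¹) * (∑' b, κ a b * u b ^ p) ^ p⁻¹) ^ p := by
          gcongr; exact ENNReal.tsum_mul_le_weight_mul_tsum_rpow hp _ _
      _ = (∑' b, κ a b) ^ (p - 1) * ∑' b, κ a b * u b ^ p := by
          rw [ENNReal.mul_rpow_of_nonneg _ _ hp₀.le, ← ENNReal.rpow_mul, ← ENNReal.rpow_mul,
            sub_mul, inv_mul_cancel₀ hp₀.ne', one_mul, ENNReal.rpow_one]
      _ ≤ D ^ (p - 1) * ∑' b, κ a b * u b ^ p := by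
          gcongr
          exact hrow a
  rw [eLpNorm_count_eq_tsum _ hq₀ hq_top, eLpNorm_count_eq_tsum _ hq₀ hq_top, one_div,
    ENNReal.rpow_inv_le_iff hp₀, ENNReal.mul_rpow_of_nonneg _ _ hp₀.le, ← ENNReal.rpow_mul,
    inv_mul_cancel₀ hp₀.ne', ENNReal.rpow_one]
  calc ∑' a, (∑' b, κ a b * u b) ^ p ≤ ∑' a, D ^ (p - 1) * ∑' b, κ a b * u b ^ p :=
        ENNReal.tsum_le_tsum hrow_pow
    _ = D ^ (p - 1) * ∑' b, (∑' a, κ a b) * u b ^ p := by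
        rw [ENNReal.tsum_mul_left, ENNReal.tsum_comm]
        simp_rw [ENNReal.tsum_mul_right]
    _ ≤ D ^ (p - 1) * ∑' b, D * u b ^ p := by gcongr with b; exact hcol b
    _ = D ^ p * ∑' b, u b ^ p := by
        rw [ENNReal.tsum_mul_left, ← mul_assoc, ENNReal.rpow_eq_rpow_sub_one_mul hp D]

lemma eLpNorm_count_le_sum_range_add_indicator_Ici (hq : 1 ≤ q) (u : ℕ → ℝ≥0∞) (n : ℕ) :
    eLpNorm u q .count ≤ ∑ k ∈ Finset.range n, u k + eLpNorm ((Ici n).indicator u) q .count := by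
  conv_lhs => rw [← indicator_self_add_compl (Iio n) u, compl_Iio]
  refine (eLpNorm_add_le .of_discrete .of_discrete hq).trans (add_le_add ?_ le_rfl)
  refine (eLpNorm_count_le_tsum hq _).trans_eq ?_
  rw [tsum_eq_sum (s := Finset.range n) fun k hk => by simp_all]
  exact Finset.sum_congr rfl fun k hk => indicator_of_mem (by simpa using hk) u

lemma tendsto_eLpNorm_count_indicator_Ici (hq₀ : q ≠ 0) (hq : q ≠ ∞)
    {u : ℕ → ℝ≥0∞} (hu : eLpNorm u q .count ≠ ∞) :
    Tendsto (fun n => eLpNorm ((Ici n).indicator u) q .count) atTop (𝓝 0) := by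
  have hp : 0 < q.toReal := ENNReal.toReal_pos hq₀ hq
  have hpow (n : ℕ) : (fun k => (Ici n).indicator u k ^ q.toReal) =
      (Ici n).indicator fun k => u k ^ q.toReal := by
    ext k; by_cases hk : k ∈ Ici n <;> simp [hk, hp]
  rw [eLpNorm_count_eq_tsum _ hq₀ hq] at hu
  simp only [eLpNorm_count_eq_tsum _ hq₀ hq, hpow]
  have hsum : ∑' k, u k ^ q.toReal ≠ ∞ := by
    intro h; simp [h, hp] at hu
  simpa [hp, Function.comp_def] using
    ((ENNReal.continuous_rpow_const (y := 1 / q.toReal)).tendsto 0).comp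
      (ENNReal.tendsto_tsum_indicator_Ici hsum)

lemma tendsto_eLpNorm_count_top_indicator_Ici {u : ℕ → ℝ≥0∞} (hu : Tendsto u atTop (𝓝 0)) :
    Tendsto (fun n => eLpNorm ((Ici n).indicator u) ∞ .count) atTop (𝓝 0) := by
  rw [ENNReal.tendsto_nhds_zero] at hu ⊢
  intro ε hε
  obtain ⟨N, hN⟩ := eventually_atTop.1 (hu ε hε)
  filter_upwards [eventually_ge_atTop N] with n hn
  rw [eLpNorm_count_top]
  refine iSup_le fun k => ?_
  by_cases hk : k ∈ Ici n
  · rw [indicator_of_mem hk]; exact hN k (hn.trans hk)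
  · simp [hk]

lemma tendsto_eLpNorm_count_indicator_Ici_tsum_mul (hq : 1 ≤ q)
    {κ : ℕ → ℕ → ℝ≥0∞} {D : ℝ≥0∞} (hD : D ≠ ∞) (hrow : ∀ k, ∑' j, κ k j ≤ D)
    (hcol : ∀ j, ∑' k, κ k j ≤ D) {u : ℕ → ℝ≥0∞} (hu : ∀ j, u j ≠ ∞)
    (htail : Tendsto (fun n => eLpNorm ((Ici n).indicator u) q .count) atTop (𝓝 0)) :
    Tendsto (fun n => eLpNorm ((Ici n).indicator fun k => ∑' j, κ k j * u j) q .count)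
      atTop (𝓝 0) := by
  rw [ENNReal.tendsto_nhds_zero]
  intro ε hε
  have hε₂ : 0 < ε / 2 := ENNReal.half_pos hε.ne'
  have hDu : Tendsto (fun n => D * eLpNorm ((Ici n).indicator u) q .count) atTop (𝓝 0) := by
    simpa using ENNReal.Tendsto.const_mul htail (Or.inr hD)
  obtain ⟨M, hM⟩ := (ENNReal.tendsto_nhds_zero.1 hDu _ hε₂).exists
  set v := (Iio M).indicator u
  -- `v` is finitely supported, so its image under the kernel is summable
  have hv : ∑' k, ∑' j, κ k j * v j < ∞ := by
    rw [ENNReal.tsum_comm]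
    calc ∑' j, ∑' k, κ k j * v j ≤ ∑' j, D * v j := by
          simp_rw [ENNReal.tsum_mul_right]; gcongr with j; exact hcol j
      _ = D * ∑ j ∈ Finset.range M, u j := by
          rw [ENNReal.tsum_mul_left, tsum_eq_sum (s := Finset.range M) fun j hj => by simp_all [v]]
          exact congrArg _ (Finset.sum_congr rfl fun j hj => indicator_of_mem (by simpa using hj) u)
      _ < ∞ := ENNReal.mul_lt_top hD.lt_top (ENNReal.sum_lt_top.2 fun j _ => (hu j).lt_top)
  filter_upwards [ENNReal.tendsto_nhds_zero.1 (ENNReal.tendsto_tsum_indicator_Ici hv.ne) _ hε₂]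
    with n hn
  have hsplit (k : ℕ) : (Ici n).indicator (fun k => ∑' j, κ k j * u j) k ≤
      ∑' j, κ k j * (Ici M).indicator u j
        + (Ici n).indicator (fun k => ∑' j, κ k j * v j) k := by
    by_cases hk : k ∈ Ici n
    · simp only [indicator_of_mem hk]
      rw [add_comm, ← ENNReal.tsum_add]
      refine le_of_eq (tsum_congr fun j => ?_)
      rw [← mul_add, ← compl_Iio, ← Pi.add_apply, indicator_self_add_compl]
    · simp [hk]
  calc eLpNorm ((Ici n).indicator fun k => ∑' j, κ k j * u j) q .count
      ≤ eLpNorm (fun k => ∑' j, κ k j * (Ici M).indicator u j) q .count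
        + eLpNorm ((Ici n).indicator fun k => ∑' j, κ k j * v j) q .count :=
        (eLpNorm_mono_ennreal hsplit).trans (eLpNorm_add_le .of_discrete .of_discrete hq)
    _ ≤ D * eLpNorm ((Ici M).indicator u) q .count
        + ∑' k, (Ici n).indicator (fun k => ∑' j, κ k j * v j) k :=
        add_le_add (eLpNorm_count_tsum_mul_le hq hrow hcol _) (eLpNorm_count_le_tsum hq _)
    _ ≤ ε / 2 + ε / 2 := add_le_add hM hn
    _ = ε := ENNReal.add_halves ε

end CountingMeasure

-- With truncated subtraction this is `a ^ (j - k)` for `k ≤ j` and `b ^ (k - j)` for `j ≤ k`.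
noncomputable def geomKernel (a b : ℝ≥0∞) (k j : ℕ) : ℝ≥0∞ := a ^ (j - k) * b ^ (k - j)

lemma geomKernel_comm (a b : ℝ≥0∞) (k j : ℕ) : geomKernel a b k j = geomKernel b a j k :=
  mul_comm _ _

lemma tsum_geomKernel_le (a b : ℝ≥0∞) (k : ℕ) :
    ∑' j, geomKernel a b k j ≤ ∑' i, a ^ i + ∑' i, b ^ i := by
  rw [← ENNReal.summable.sum_add_tsum_nat_add' (k := k), add_comm]
  refine add_le_add (le_of_eq (tsum_congr fun i => by simp [geomKernel])) ?_
  calc ∑ j ∈ Finset.range k, geomKernel a b k j = ∑ j ∈ Finset.range k, b ^ (k - j) :=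
        Finset.sum_congr rfl fun j hj => by
          simp [geomKernel, Nat.sub_eq_zero_of_le (Finset.mem_range.1 hj).le]
    _ ≤ ∑ j ∈ Finset.range (k + 1), b ^ (k - j) :=
        Finset.sum_le_sum_of_subset (Finset.range_subset_range.2 k.le_succ)
    _ = ∑ j ∈ Finset.range (k + 1), b ^ j := Finset.sum_range_reflect (b ^ ·) (k + 1)
    _ ≤ ∑' i, b ^ i := ENNReal.sum_le_tsum _

lemma geomKernel_two_rpow_of_le {k j : ℕ} (h : k ≤ j) (θ : ℝ) (b : ℝ≥0∞) :
    geomKernel (2 ^ (-θ)) b k j = 2 ^ (((k : ℝ) - j) * θ) := by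
  rw [geomKernel, Nat.sub_eq_zero_of_le h, pow_zero, mul_one, ENNReal.two_rpow_neg_pow,
    Nat.cast_sub h]
  ring_nf

lemma geomKernel_two_rpow_of_ge {k j : ℕ} (h : j ≤ k) (θ : ℝ) (a : ℝ≥0∞) :
    geomKernel a (2 ^ (-θ)) k j = 2 ^ (((j : ℝ) - k) * θ) := by
  rw [geomKernel_comm, geomKernel_two_rpow_of_le h]

section Sigma

variable {E : Type*} {N : E → ℝ} {s t : ℝ} {q : ℝ≥0∞} {f : ℕ → E}

noncomputable def sigmaWeight (N : E → ℝ) (s : ℝ) (f : ℕ → E) (k : ℕ) : ℝ≥0∞ :=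
  ENNReal.ofReal (2 ^ ((k : ℝ) * s) * N (f k))

lemma sigmaNorm_eq_eLpNorm (hq : q ≠ 0) :
    sigmaNorm N s q f = eLpNorm (sigmaWeight N s f) q .count := by
  unfold sigmaNorm
  split_ifs with h
  · rw [h, eLpNorm_count_top]; rfl
  · rw [eLpNorm_count_eq_tsum _ hq h]; rfl

lemma sigmaNorm_top : sigmaNorm N s ∞ f = ⨆ k, sigmaWeight N s f k := if_pos rfl

lemma sigmaNorm_one : sigmaNorm N s 1 f = ∑' k, sigmaWeight N s f k := by
  simp [sigmaNorm_eq_eLpNorm, eLpNorm_count_eq_tsum]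

lemma sigmaWeight_le_sigmaNorm (hq : q ≠ 0) (k : ℕ) : sigmaWeight N s f k ≤ sigmaNorm N s q f := by
  rw [sigmaNorm_eq_eLpNorm hq]; exact enorm_le_eLpNorm_count _ k hq

lemma sigmaWeight_eq (k : ℕ) :
    sigmaWeight N s f k = 2 ^ ((k : ℝ) * s) * ENNReal.ofReal (N (f k)) := by
  rw [sigmaWeight, ENNReal.ofReal_mul (by positivity), ← ENNReal.ofReal_rpow_of_pos two_pos]
  simp

lemma two_rpow_mul_sigmaWeight (t : ℝ) (k j : ℕ) :
    2 ^ ((k : ℝ) * (s - t)) * sigmaWeight N t f j =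
      2 ^ (((k : ℝ) - j) * (s - t)) * sigmaWeight N s f j := by
  simp only [sigmaWeight_eq, ← mul_assoc, ← ENNReal.rpow_add _ _ two_ne_zero ENNReal.ofNat_ne_top]
  ring_nf

lemma sigmaWeight_le_two_rpow_mul_sigmaNorm_top (t : ℝ) (k : ℕ) :
    sigmaWeight N s f k ≤ 2 ^ ((k : ℝ) * (s - t)) * sigmaNorm N t ∞ f :=
  calc sigmaWeight N s f k = 2 ^ ((k : ℝ) * (s - t)) * sigmaWeight N t f k := by
        rw [two_rpow_mul_sigmaWeight]; simp
    _ ≤ 2 ^ ((k : ℝ) * (s - t)) * sigmaNorm N t ∞ f := by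
        gcongr; exact sigmaWeight_le_sigmaNorm ENNReal.top_ne_zero k

lemma sigmaNorm_one_le_tsum_mul_sigmaNorm (hq : q ≠ 0) (t : ℝ) :
    sigmaNorm N t 1 f ≤ (∑' j, ((2 : ℝ≥0∞) ^ (-(s - t))) ^ j) * sigmaNorm N s q f := by
  rw [sigmaNorm_one, ← ENNReal.tsum_mul_right]
  refine ENNReal.tsum_le_tsum fun j => ?_
  calc sigmaWeight N t f j = ((2 : ℝ≥0∞) ^ (-(s - t))) ^ j * sigmaWeight N s f j := by
        rw [ENNReal.two_rpow_neg_pow]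
        simpa using two_rpow_mul_sigmaWeight (N := N) (f := f) (s := s) t 0 j
    _ ≤ ((2 : ℝ≥0∞) ^ (-(s - t))) ^ j * sigmaNorm N s q f := by
        gcongr; exact sigmaWeight_le_sigmaNorm hq j

lemma memSigma.tendsto_eLpNorm_indicator_Ici (hq : q ≠ 0) (hf : memSigma N s q f) :
    Tendsto (fun n => eLpNorm ((Ici n).indicator (sigmaWeight N s f)) q .count) atTop (𝓝 0) := by
  unfold memSigma at hf
  split_ifs at hf with h
  · subst h
    have : Tendsto (sigmaWeight N s f) atTop (𝓝 (ENNReal.ofReal 0)) := ENNReal.tendsto_ofReal hf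
    exact tendsto_eLpNorm_count_top_indicator_Ici (by rwa [ENNReal.ofReal_zero] at this)
  · exact tendsto_eLpNorm_count_indicator_Ici hq h (sigmaNorm_eq_eLpNorm hq ▸ hf.ne)

def sigmaBall (N : E → ℝ) (s : ℝ) (q : ℝ≥0∞) (r : ℝ) : Set (ℕ → E) :=
  {v | memSigma N s q v ∧ sigmaNorm N s q v < ENNReal.ofReal r}

end Sigma

section PseudoNorm

variable {E : Type*} [AddCommGroup E] [Module ℝ E] {N : E → ℝ} {s : ℝ}

lemma IsPseudoNorm.map_zero (hN : IsPseudoNorm N) : N 0 = 0 := (hN.eq_zero_iff 0).2 rfl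

lemma sigmaWeight_add_le (hN : IsPseudoNorm N) (f g : ℕ → E) (k : ℕ) :
    sigmaWeight N s (f + g) k ≤ sigmaWeight N s f k + sigmaWeight N s g k := by
  simp only [sigmaWeight_eq, ← mul_add, ← ENNReal.ofReal_add (hN.nonneg _) (hN.nonneg _)]
  gcongr
  exact hN.add_le _ _

lemma sigmaWeight_sub_le (hN : IsPseudoNorm N) (f g : ℕ → E) (k : ℕ) :
    sigmaWeight N s (f - g) k ≤ sigmaWeight N s f k + sigmaWeight N s g k := by
  rw [sub_eq_add_neg]
  refine (sigmaWeight_add_le hN f (-g) k).trans_eq ?_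
  simp [sigmaWeight, hN.neg]

end PseudoNorm

section Smoothing

variable {E : Type*} [AddCommGroup E] {N : E → ℝ} {s t : ℝ} {q : ℝ≥0∞} {m : ℕ} {f : ℕ → E}

lemma sigmaWeight_smoothS (hN : N 0 = 0) (j : ℕ) :
    sigmaWeight N s (smoothS m f) j = if j ≤ m then sigmaWeight N s f j else 0 := by
  split_ifs with hj <;> simp [sigmaWeight, smoothS, hj, hN]

lemma sigmaWeight_sub_smoothS (hN : N 0 = 0) (j : ℕ) :
    sigmaWeight N s (f - smoothS m f) j = if j ≤ m then 0 else sigmaWeight N s f j := by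
  split_ifs with hj <;> simp [sigmaWeight, smoothS, hj, hN]

lemma sigmaNorm_smoothS_le (hN : N 0 = 0) (hq : q ≠ 0) :
    sigmaNorm N s q (smoothS m f) ≤ sigmaNorm N s q f := by
  simp only [sigmaNorm_eq_eLpNorm hq]
  refine eLpNorm_mono_ennreal fun j => ?_
  rw [sigmaWeight_smoothS hN]
  split_ifs <;> simp

lemma memSigma_smoothS (hN : N 0 = 0) (hq : q ≠ 0) (hf : memSigma N s q f) :
    memSigma N s q (smoothS m f) := by
  unfold memSigma at hf ⊢
  split_ifs at hf ⊢
  · refine tendsto_const_nhds.congr' ?_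
    filter_upwards [eventually_gt_atTop m] with k hk
    simp [smoothS, hk.not_ge, hN]
  · exact (sigmaNorm_smoothS_le hN hq).trans_lt hf

lemma memSigma_one_smoothS (hN : N 0 = 0) (σ : ℝ) : memSigma N σ 1 (smoothS m f) := by
  rw [memSigma, if_neg ENNReal.one_ne_top, sigmaNorm_one,
    tsum_eq_sum (s := Finset.range (m + 1)) fun j hj => by
      rw [sigmaWeight_smoothS hN, if_neg (by simpa [Nat.lt_succ_iff] using hj)]]
  exact ENNReal.sum_lt_top.2 fun j _ => ENNReal.ofReal_lt_top

lemma smoothS_mem_sigmaBall (hN : N 0 = 0) (hq : q ≠ 0) {r : ℝ} (hf : f ∈ sigmaBall N s q r) :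
    smoothS m f ∈ sigmaBall N s q r :=
  ⟨memSigma_smoothS hN hq hf.1, (sigmaNorm_smoothS_le hN hq).trans_lt hf.2⟩

lemma two_rpow_mul_sigmaNorm_one_sub_smoothS_le (hN : N 0 = 0) (b : ℝ≥0∞) (f : ℕ → E) (k : ℕ) :
    2 ^ ((k : ℝ) * (s - t)) * sigmaNorm N t 1 (f - smoothS k f) ≤
      ∑' j, geomKernel (2 ^ (-(s - t))) b k j * sigmaWeight N s f j := by
  rw [sigmaNorm_one, ← ENNReal.tsum_mul_left]
  refine ENNReal.tsum_le_tsum fun j => ?_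
  rw [sigmaWeight_sub_smoothS hN]
  split_ifs with hj
  · simp
  · rw [two_rpow_mul_sigmaWeight, geomKernel_two_rpow_of_le (by omega)]

lemma two_rpow_mul_sigmaNorm_one_smoothS_le (hN : N 0 = 0) (a : ℝ≥0∞) (f : ℕ → E) (k : ℕ) :
    2 ^ ((k : ℝ) * (s - t)) * sigmaNorm N t 1 (smoothS k f) ≤
      ∑' j, geomKernel a (2 ^ (-(t - s))) k j * sigmaWeight N s f j := by
  rw [sigmaNorm_one, ← ENNReal.tsum_mul_left]
  refine ENNReal.tsum_le_tsum fun j => ?_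
  rw [sigmaWeight_smoothS hN]
  split_ifs with hj
  · rw [two_rpow_mul_sigmaWeight, geomKernel_two_rpow_of_ge hj,
      show ((j : ℝ) - k) * (t - s) = ((k : ℝ) - j) * (s - t) by ring]
  · simp

end Smoothing

section Estimates

variable {E F : Type*} [AddCommGroup E] [Module ℝ E] [AddCommGroup F] [Module ℝ F]
  {NE : E → ℝ} {NF : F → ℝ} {s₀ s s₁ : ℝ} {q : ℝ≥0∞} {r : ℝ} {c₀ c₁ : ℝ≥0∞}
  {Φ : (ℕ → E) → (ℕ → F)}

lemma sigmaWeight_le_tsum_geomKernel_mul (hNE : IsPseudoNorm NE) (hNF : IsPseudoNorm NF)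
    (hq : q ≠ 0)
    (hlip : ∀ v ∈ sigmaBall NE s q r, ∀ w ∈ sigmaBall NE s q r,
      sigmaNorm NF s₀ ∞ (Φ v - Φ w) ≤ c₀ * sigmaNorm NE s₀ 1 (v - w))
    (htame : ∀ v ∈ sigmaBall NE s q r, (∀ σ, memSigma NE σ 1 v) →
      sigmaNorm NF s₁ ∞ (Φ v) ≤ c₁ * sigmaNorm NE s₁ 1 v)
    {v : ℕ → E} (hv : v ∈ sigmaBall NE s q r) (k : ℕ) :
    sigmaWeight NF s (Φ v) k ≤
      ∑' j, (c₀ + c₁) * geomKernel (2 ^ (-(s - s₀))) (2 ^ (-(s₁ - s))) k j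
        * sigmaWeight NE s v j := by
  have hv' := smoothS_mem_sigmaBall (m := k) hNE.map_zero hq hv
  calc sigmaWeight NF s (Φ v) k
      ≤ sigmaWeight NF s (Φ v - Φ (smoothS k v)) k + sigmaWeight NF s (Φ (smoothS k v)) k := by
        simpa using sigmaWeight_add_le hNF (Φ v - Φ (smoothS k v)) (Φ (smoothS k v)) k
    _ ≤ 2 ^ ((k : ℝ) * (s - s₀)) * sigmaNorm NF s₀ ∞ (Φ v - Φ (smoothS k v))
        + 2 ^ ((k : ℝ) * (s - s₁)) * sigmaNorm NF s₁ ∞ (Φ (smoothS k v)) :=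
        add_le_add (sigmaWeight_le_two_rpow_mul_sigmaNorm_top _ _)
          (sigmaWeight_le_two_rpow_mul_sigmaNorm_top _ _)
    _ ≤ 2 ^ ((k : ℝ) * (s - s₀)) * (c₀ * sigmaNorm NE s₀ 1 (v - smoothS k v))
        + 2 ^ ((k : ℝ) * (s - s₁)) * (c₁ * sigmaNorm NE s₁ 1 (smoothS k v)) := by
        gcongr
        exacts [hlip v hv _ hv', htame _ hv' fun σ => memSigma_one_smoothS hNE.map_zero σ]
    _ = c₀ * (2 ^ ((k : ℝ) * (s - s₀)) * sigmaNorm NE s₀ 1 (v - smoothS k v))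
        + c₁ * (2 ^ ((k : ℝ) * (s - s₁)) * sigmaNorm NE s₁ 1 (smoothS k v)) := by ring
    _ ≤ c₀ * ∑' j, geomKernel (2 ^ (-(s - s₀))) (2 ^ (-(s₁ - s))) k j * sigmaWeight NE s v j
        + c₁ * ∑' j, geomKernel (2 ^ (-(s - s₀))) (2 ^ (-(s₁ - s))) k j * sigmaWeight NE s v j := by
        gcongr
        · exact two_rpow_mul_sigmaNorm_one_sub_smoothS_le hNE.map_zero _ v k
        · exact two_rpow_mul_sigmaNorm_one_smoothS_le hNE.map_zero _ v k
    _ = _ := by rw [← add_mul, ← ENNReal.tsum_mul_left]; simp only [mul_assoc]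

lemma sigmaNorm_sub_le_of_le_tsum_mul (hNE : IsPseudoNorm NE) (hNF : IsPseudoNorm NF)
    (hq : 1 ≤ q) {κ : ℕ → ℕ → ℝ≥0∞} {D : ℝ≥0∞} (hrow : ∀ k, ∑' j, κ k j ≤ D)
    (hcol : ∀ j, ∑' k, κ k j ≤ D) {f g : ℕ → E} {x y : ℕ → F}
    (hx : ∀ k, sigmaWeight NF s x k ≤ ∑' j, κ k j * sigmaWeight NE s g j)
    (hy : ∀ k, sigmaWeight NF s y k ≤ ∑' j, κ k j * sigmaWeight NE s f j)
    {C : ℕ → ℝ≥0∞} (hC : ∀ k, sigmaWeight NF s (x - y) k ≤ C k * sigmaNorm NE s q (g - f))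
    (n : ℕ) :
    sigmaNorm NF s q (x - y) ≤ (∑ k ∈ Finset.range n, C k + D) * sigmaNorm NE s q (g - f)
      + 2 * eLpNorm ((Ici n).indicator fun k => ∑' j, κ k j * sigmaWeight NE s f j) q .count := by
  have hq₀ : q ≠ 0 := (zero_lt_one.trans_le hq).ne'
  set T := fun k => ∑' j, κ k j * sigmaWeight NE s f j
  have htail (k : ℕ) : (Ici n).indicator (sigmaWeight NF s (x - y)) k ≤
      ∑' j, κ k j * sigmaWeight NE s (g - f) j
        + ((Ici n).indicator T k + (Ici n).indicator T k) := by
    by_cases hk : k ∈ Ici n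
    · simp only [indicator_of_mem hk]
      calc sigmaWeight NF s (x - y) k ≤ sigmaWeight NF s x k + sigmaWeight NF s y k :=
            sigmaWeight_sub_le hNF x y k
        _ ≤ ∑' j, κ k j * sigmaWeight NE s g j + T k := add_le_add (hx k) (hy k)
        _ ≤ ∑' j, κ k j * (sigmaWeight NE s (g - f) j + sigmaWeight NE s f j) + T k := by
            gcongr with j
            simpa using sigmaWeight_add_le hNE (g - f) f j
        _ = ∑' j, κ k j * sigmaWeight NE s (g - f) j + (T k + T k) := by
            simp only [mul_add]; rw [ENNReal.tsum_add, add_assoc]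
    · simp [hk]
  have htail_norm : eLpNorm ((Ici n).indicator (sigmaWeight NF s (x - y))) q .count ≤
      D * sigmaNorm NE s q (g - f) + 2 * eLpNorm ((Ici n).indicator T) q .count := by
    rw [sigmaNorm_eq_eLpNorm hq₀, two_mul]
    refine (eLpNorm_mono_ennreal htail).trans ?_
    refine (eLpNorm_add_le .of_discrete .of_discrete hq).trans (add_le_add
      (eLpNorm_count_tsum_mul_le hq hrow hcol _) ?_)
    exact eLpNorm_add_le .of_discrete .of_discrete hq
  calc sigmaNorm NF s q (x - y)
      ≤ ∑ k ∈ Finset.range n, sigmaWeight NF s (x - y) k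
        + eLpNorm ((Ici n).indicator (sigmaWeight NF s (x - y))) q .count := by
        rw [sigmaNorm_eq_eLpNorm hq₀]
        exact eLpNorm_count_le_sum_range_add_indicator_Ici hq _ n
    _ ≤ (∑ k ∈ Finset.range n, C k) * sigmaNorm NE s q (g - f)
        + (D * sigmaNorm NE s q (g - f) + 2 * eLpNorm ((Ici n).indicator T) q .count) := by
        rw [Finset.sum_mul]
        exact add_le_add (Finset.sum_le_sum fun k _ => hC k) htail_norm
    _ = _ := by ring

lemma exists_sigmaNorm_sub_le_mul_add (hNE : IsPseudoNorm NE) (hNF : IsPseudoNorm NF)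
    (hq : 1 ≤ q) (hs₀ : s₀ < s) (hs₁ : s < s₁) (hc₀ : c₀ ≠ ∞) (hc₁ : c₁ ≠ ∞)
    (hlip : ∀ v ∈ sigmaBall NE s q r, ∀ w ∈ sigmaBall NE s q r,
      sigmaNorm NF s₀ ∞ (Φ v - Φ w) ≤ c₀ * sigmaNorm NE s₀ 1 (v - w))
    (htame : ∀ v ∈ sigmaBall NE s q r, (∀ σ, memSigma NE σ 1 v) →
      sigmaNorm NF s₁ ∞ (Φ v) ≤ c₁ * sigmaNorm NE s₁ 1 v)
    {f : ℕ → E} (hf : f ∈ sigmaBall NE s q r) :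
    ∃ A B : ℕ → ℝ≥0∞, (∀ n, A n ≠ ∞) ∧ Tendsto B atTop (𝓝 0) ∧
      ∀ n, ∀ g ∈ sigmaBall NE s q r,
        sigmaNorm NF s q (Φ g - Φ f) ≤ A n * sigmaNorm NE s q (g - f) + B n := by
  have hq₀ : q ≠ 0 := (zero_lt_one.trans_le hq).ne'
  set ρ₀ : ℝ≥0∞ := 2 ^ (-(s - s₀))
  set ρ₁ : ℝ≥0∞ := 2 ^ (-(s₁ - s))
  have hρ₀ : ∑' i, ρ₀ ^ i ≠ ∞ := (tsum_geometric_lt_top.2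
    (ENNReal.rpow_lt_one_of_one_lt_of_neg ENNReal.one_lt_two (neg_neg_of_pos (sub_pos.2 hs₀)))).ne
  have hρ₁ : ∑' i, ρ₁ ^ i ≠ ∞ := (tsum_geometric_lt_top.2
    (ENNReal.rpow_lt_one_of_one_lt_of_neg ENNReal.one_lt_two (neg_neg_of_pos (sub_pos.2 hs₁)))).ne
  set κ := fun k j => (c₀ + c₁) * geomKernel ρ₀ ρ₁ k j
  set D := (c₀ + c₁) * (∑' i, ρ₀ ^ i + ∑' i, ρ₁ ^ i) with hD_def
  have hD : D ≠ ∞ := by finiteness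
  have hrow (k : ℕ) : ∑' j, κ k j ≤ D := by
    rw [ENNReal.tsum_mul_left, hD_def]; gcongr; exact tsum_geomKernel_le ρ₀ ρ₁ k
  have hcol (j : ℕ) : ∑' k, κ k j ≤ D := by
    rw [ENNReal.tsum_mul_left, hD_def, add_comm (∑' i, ρ₀ ^ i)]
    gcongr
    simpa only [geomKernel_comm ρ₀] using tsum_geomKernel_le ρ₁ ρ₀ j
  set C := fun k : ℕ => 2 ^ ((k : ℝ) * (s - s₀)) * c₀ * ∑' i, ρ₀ ^ i
  refine ⟨fun n => ∑ k ∈ Finset.range n, C k + D,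
    fun n => 2 * eLpNorm ((Ici n).indicator fun k => ∑' j, κ k j * sigmaWeight NE s f j) q .count,
    fun n => ENNReal.add_ne_top.2 ⟨ENNReal.sum_ne_top.2 fun k _ => by finiteness, hD⟩, ?_,
    fun n g hg => ?_⟩
  · have := ENNReal.Tendsto.const_mul (tendsto_eLpNorm_count_indicator_Ici_tsum_mul hq hD
      hrow hcol (u := sigmaWeight NE s f) (fun j => ENNReal.ofReal_ne_top)
      (hf.1.tendsto_eLpNorm_indicator_Ici hq₀)) (Or.inr (ENNReal.ofNat_ne_top (n := 2)))
    rwa [mul_zero] at this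
  refine sigmaNorm_sub_le_of_le_tsum_mul hNE hNF hq hrow hcol
    (sigmaWeight_le_tsum_geomKernel_mul hNE hNF hq₀ hlip htame hg)
    (sigmaWeight_le_tsum_geomKernel_mul hNE hNF hq₀ hlip htame hf) (fun k => ?_) n
  calc sigmaWeight NF s (Φ g - Φ f) k
      ≤ 2 ^ ((k : ℝ) * (s - s₀)) * sigmaNorm NF s₀ ∞ (Φ g - Φ f) :=
        sigmaWeight_le_two_rpow_mul_sigmaNorm_top _ _
    _ ≤ 2 ^ ((k : ℝ) * (s - s₀)) * (c₀ * ((∑' i, ρ₀ ^ i) * sigmaNorm NE s q (g - f))) := by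
        gcongr
        exact (hlip g hg f hf).trans (by gcongr; exact sigmaNorm_one_le_tsum_mul_sigmaNorm hq₀ s₀)
    _ = C k * sigmaNorm NE s q (g - f) := by ring

end Estimates

theorem continuity_of_weakLipschitz_tame_general
    {E F : Type*} [AddCommGroup E] [Module ℝ E] [AddCommGroup F] [Module ℝ F]
    (NE : E → ℝ) (NF : F → ℝ) (hNE : IsPseudoNorm NE) (hNF : IsPseudoNorm NF)
    (s₀ s s₁ : ℝ) (hs₀ : s₀ < s) (hs₁ : s < s₁)
    (q : ℝ≥0∞) (hq : 1 ≤ q) (r : ℝ)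
    (Φ : (ℕ → E) → (ℕ → F))
    -- weak Lipschitz estimate
    (C₀ : ℝ)
    (hlip : ∀ v w, memSigma NE s q v → sigmaNorm NE s q v < ENNReal.ofReal r →
      memSigma NE s q w → sigmaNorm NE s q w < ENNReal.ofReal r →
      sigmaNorm NF s₀ ⊤ (Φ v - Φ w) ≤ ENNReal.ofReal C₀ * sigmaNorm NE s₀ 1 (v - w))
    -- tame estimate, for v ∈ Σ^∞_1(E) ∩ B_{s,q}(0,r)
    (C₁ : ℝ)
    (htame : ∀ v, (∀ σ : ℝ, memSigma NE σ 1 v) →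
      memSigma NE s q v → sigmaNorm NE s q v < ENNReal.ofReal r →
      sigmaNorm NF s₁ ⊤ (Φ v) ≤ ENNReal.ofReal C₁ * sigmaNorm NE s₁ 1 v) :
    -- continuity of Φ : B_{s,q}(0,r) → Σ^s_q(F)
    ∀ f, memSigma NE s q f → sigmaNorm NE s q f < ENNReal.ofReal r →
      ∀ ε : ℝ, 0 < ε → ∃ δ : ℝ, 0 < δ ∧
        ∀ g, memSigma NE s q g → sigmaNorm NE s q g < ENNReal.ofReal r →
          sigmaNorm NE s q (g - f) < ENNReal.ofReal δ →
          sigmaNorm NF s q (Φ g - Φ f) < ENNReal.ofReal ε := by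
  intro f hf hfr ε hε
  obtain ⟨A, B, hA, hB, hbound⟩ := exists_sigmaNorm_sub_le_mul_add (Φ := Φ) hNE hNF hq hs₀ hs₁
    ENNReal.ofReal_ne_top ENNReal.ofReal_ne_top
    (fun v hv w hw => hlip v w hv.1 hv.2 hw.1 hw.2) (fun v hv hσ => htame v hσ hv.1 hv.2)
    (show f ∈ sigmaBall NE s q r from ⟨hf, hfr⟩)
  obtain ⟨δ, hδ, hδε⟩ := exists_pos_forall_lt_of_le_mul_add
    (d := fun g => sigmaNorm NF s q (Φ g - Φ f)) (w := fun g => sigmaNorm NE s q (g - f))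
    hA hB hbound hε
  exact ⟨δ, hδ, fun g hg hgr => hδε g ⟨hg, hgr⟩⟩

/-- Theorem 3.1 (continuity part): if `Φ : B_{s,q}(0,r) ⊆ Σ^s_q(E) → Σ^{s₀}_∞(F)`
satisfies the weak Lipschitz estimate and the tame estimate, then
`Φ : B_{s,q}(0,r) → Σ^s_q(F)` is continuous for the distances induced by the
pseudo-norms `‖·‖_{Σ^s_q(E)}` and `‖·‖_{Σ^s_q(F)}`. -/
theorem continuity_of_weakLipschitz_tame
    {E F : Type*} [AddCommGroup E] [Module ℝ E] [AddCommGroup F] [Module ℝ F]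
    (NE : E → ℝ) (NF : F → ℝ) (hNE : IsPseudoNorm NE) (hNF : IsPseudoNorm NF)
    (s₀ s s₁ : ℝ) (hs₀ : s₀ < s) (hs₁ : s < s₁)
    (q : ℝ≥0∞) (hq : 1 ≤ q) (r : ℝ) (hr : 0 < r)
    (Φ : (ℕ → E) → (ℕ → F))
    -- Φ maps the ball B_{s,q}(0,r) into Σ^{s₀}_∞(F)
    (hΦmem : ∀ v, memSigma NE s q v → sigmaNorm NE s q v < ENNReal.ofReal r →
      memSigma NF s₀ ⊤ (Φ v))
    -- weak Lipschitz estimate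
    (C₀ : ℝ) (hC₀ : 0 < C₀)
    (hlip : ∀ v w, memSigma NE s q v → sigmaNorm NE s q v < ENNReal.ofReal r →
      memSigma NE s q w → sigmaNorm NE s q w < ENNReal.ofReal r →
      sigmaNorm NF s₀ ⊤ (Φ v - Φ w) ≤ ENNReal.ofReal C₀ * sigmaNorm NE s₀ 1 (v - w))
    -- tame estimate, for v ∈ Σ^∞_1(E) ∩ B_{s,q}(0,r)
    (C₁ : ℝ) (hC₁ : 0 < C₁)
    (htame : ∀ v, (∀ σ : ℝ, memSigma NE σ 1 v) →
      memSigma NE s q v → sigmaNorm NE s q v < ENNReal.ofReal r →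
      sigmaNorm NF s₁ ⊤ (Φ v) ≤ ENNReal.ofReal C₁ * sigmaNorm NE s₁ 1 v) :
    -- continuity of Φ : B_{s,q}(0,r) → Σ^s_q(F)
    ∀ f, memSigma NE s q f → sigmaNorm NE s q f < ENNReal.ofReal r →
      ∀ ε : ℝ, 0 < ε → ∃ δ : ℝ, 0 < δ ∧
        ∀ g, memSigma NE s q g → sigmaNorm NE s q g < ENNReal.ofReal r →
          sigmaNorm NE s q (g - f) < ENNReal.ofReal δ →
          sigmaNorm NF s q (Φ g - Φ f) < ENNReal.ofReal ε :=
  continuity_of_weakLipschitz_tame_general NE NF hNE hNF s₀ s s₁ hs₀ hs₁ q hq r Φ C₀ hlip C₁ htame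
end

section
/- Let (E,‖·‖_E) be a pseudo-normed real vector space, r < r' real numbers and q ∈ [1,∞). For every f ∈ Σ^r_q(E) one has (∑_{n∈ℕ} 2^{−qn(r'−r)} ‖S_n f‖_{Σ^{r'}_1}^q)^{1/q} ≤ (1/(1 − 2^{r−r'})) ‖f‖_{Σ^r_q}. -/
/-!
Put `a_k = 2^{kr} ‖f_k‖_E` and `c_j = 2^{-j(r'-r)}`. Since
`2^{-n(r'-r)} 2^{kr'} = c_{n-k} 2^{kr}`, the `n`-th term of the left-hand side is
`(∑_{k ≤ n} c_{n-k} a_k)^q`, the `q`-th power of a causal convolution `c ⋆ a`. Young's inequality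
`‖c ⋆ a‖_{ℓ^q} ≤ ‖c‖_{ℓ^1} ‖a‖_{ℓ^q}`, proved by the weighted Hölder inequality in each term and
the Cauchy product formula for the resulting double sum, gives the bound with the geometric sum
`‖c‖_{ℓ^1} = 1/(1 - 2^{r-r'})`.
-/

open Filter
open scoped ENNReal NNReal

open Finset

namespace ENNReal

lemma tsum_mul_tsum_eq_tsum_sum_range (f g : ℕ → ℝ≥0∞) :
    (∑' n, f n) * ∑' n, g n = ∑' n, ∑ k ∈ range (n + 1), f k * g (n - k) := by
  simp_rw [← Nat.sum_antidiagonal_eq_sum_range_succ fun k l ↦ f k * g l, ← ENNReal.tsum_mul_right,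
    ← ENNReal.tsum_mul_left, ← ENNReal.tsum_prod,
    ← HasAntidiagonal.sigmaAntidiagonalEquivProd.tsum_eq (fun x : ℕ × ℕ ↦ f x.1 * g x.2),
    ENNReal.tsum_sigma', tsum_fintype]
  exact tsum_congr fun n ↦ sum_attach (antidiagonal n) fun p ↦ f p.1 * g p.2

lemma rpow_inner_le_weight_mul_Lp {ι : Type*} (s : Finset ι) {p : ℝ} (hp : 1 ≤ p)
    (w f : ι → ℝ≥0∞) :
    (∑ i ∈ s, w i * f i) ^ p ≤ (∑ i ∈ s, w i) ^ (p - 1) * ∑ i ∈ s, w i * f i ^ p := by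
  have hp₀ : 0 < p := by linarith
  calc (∑ i ∈ s, w i * f i) ^ p
      ≤ ((∑ i ∈ s, w i) ^ (1 - p⁻¹) * (∑ i ∈ s, w i * f i ^ p) ^ p⁻¹) ^ p :=
        rpow_le_rpow (inner_le_weight_mul_Lp_of_nonneg s hp w f) hp₀.le
    _ = (∑ i ∈ s, w i) ^ (p - 1) * ∑ i ∈ s, w i * f i ^ p := by
        rw [mul_rpow_of_nonneg _ _ hp₀.le, ← rpow_mul, ← rpow_mul, inv_mul_cancel₀ hp₀.ne',
          rpow_one, sub_mul, one_mul, inv_mul_cancel₀ hp₀.ne']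

lemma tsum_rpow_sum_range_mul_le (c a : ℕ → ℝ≥0∞) {q : ℝ} (hq : 1 ≤ q) :
    ∑' n, (∑ k ∈ range (n + 1), c (n - k) * a k) ^ q ≤ (∑' j, c j) ^ q * ∑' k, a k ^ q := by
  set C := ∑' j, c j
  have hweight (n : ℕ) : ∑ k ∈ range (n + 1), c (n - k) ≤ C := by
    calc ∑ k ∈ range (n + 1), c (n - k) = ∑ j ∈ range (n + 1), c j := by
          simpa using sum_range_reflect c (n + 1)
      _ ≤ C := ENNReal.sum_le_tsum _
  calc ∑' n, (∑ k ∈ range (n + 1), c (n - k) * a k) ^ q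
      ≤ ∑' n, C ^ (q - 1) * ∑ k ∈ range (n + 1), c (n - k) * a k ^ q :=
        ENNReal.tsum_le_tsum fun n => (rpow_inner_le_weight_mul_Lp _ hq _ _).trans <|
          mul_le_mul_left (rpow_le_rpow (hweight n) (by linarith)) _
    _ = C ^ (q - 1) * ((∑' k, a k ^ q) * C) := by
        simp_rw [ENNReal.tsum_mul_left, mul_comm (c _)]
        rw [tsum_mul_tsum_eq_tsum_sum_range]
    _ = C ^ (q - 1) * C ^ (1 : ℝ) * ∑' k, a k ^ q := by rw [rpow_one, mul_comm _ C, mul_assoc]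
    _ = C ^ q * ∑' k, a k ^ q := by
        rw [← rpow_add_of_nonneg _ _ (by linarith) zero_le_one, sub_add_cancel]

end ENNReal

lemma tsum_ofReal_two_rpow_neg_mul {s : ℝ} (hs : 0 < s) :
    ∑' j : ℕ, ENNReal.ofReal (2 ^ (-(j * s))) = ENNReal.ofReal (1 / (1 - 2 ^ (-s))) := by
  have hratio : (2 : ℝ) ^ (-s) < 1 := Real.rpow_lt_one_of_one_lt_of_neg one_lt_two (by linarith)
  have hpow (j : ℕ) : ENNReal.ofReal (2 ^ (-(j * s))) = ENNReal.ofReal (2 ^ (-s)) ^ j := by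
    rw [← ENNReal.ofReal_pow (by positivity), ← Real.rpow_natCast, ← Real.rpow_mul zero_le_two]
    ring_nf
  rw [tsum_congr hpow, ENNReal.tsum_geometric, ← ENNReal.ofReal_one,
    ← ENNReal.ofReal_sub _ (by positivity), one_div, ENNReal.ofReal_inv_of_pos (by linarith)]

section SigmaNorm

variable {E : Type*} (N : E → ℝ) (s : ℝ) (f : ℕ → E)

lemma sigmaNorm_ofReal {q : ℝ} (hq : 0 ≤ q) :
    sigmaNorm N s (ENNReal.ofReal q) f =
      (∑' k : ℕ, ENNReal.ofReal (2 ^ ((k : ℝ) * s) * N (f k)) ^ q) ^ (1 / q) := by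
  rw [sigmaNorm, if_neg ENNReal.ofReal_ne_top, ENNReal.toReal_ofReal hq]

lemma sigmaNorm_one_smoothS [Zero E] (hN : N 0 = 0) (n : ℕ) :
    sigmaNorm N s 1 (smoothS n f) =
      ∑ k ∈ range (n + 1), ENNReal.ofReal (2 ^ ((k : ℝ) * s) * N (f k)) := by
  rw [sigmaNorm, if_neg ENNReal.one_ne_top, ENNReal.toReal_one, div_one]
  simp_rw [ENNReal.rpow_one]
  rw [tsum_eq_sum (s := range (n + 1)) fun k hk => by
    simp [smoothS, Nat.lt_succ_iff.not.mp (mt mem_range.mpr hk), hN]]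
  refine sum_congr rfl fun k hk => ?_
  rw [smoothS, if_pos (Nat.lt_succ_iff.mp (mem_range.mp hk))]

lemma two_rpow_mul_sigmaNorm_one_smoothS_rpow [Zero E] (hN : N 0 = 0) {r' q : ℝ} (hq : 0 ≤ q)
    (n : ℕ) :
    ENNReal.ofReal (2 ^ (-(q * n * (r' - s)))) * sigmaNorm N r' 1 (smoothS n f) ^ q =
      (∑ k ∈ range (n + 1), ENNReal.ofReal (2 ^ (-(((n - k : ℕ) : ℝ) * (r' - s)))) *
        ENNReal.ofReal (2 ^ ((k : ℝ) * s) * N (f k))) ^ q := by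
  have hscale : ENNReal.ofReal (2 ^ (-(q * n * (r' - s)))) =
      ENNReal.ofReal (2 ^ (-(n * (r' - s)))) ^ q := by
    rw [ENNReal.ofReal_rpow_of_nonneg (by positivity) hq, ← Real.rpow_mul zero_le_two]
    ring_nf
  rw [hscale, sigmaNorm_one_smoothS N r' f hN n, ← ENNReal.mul_rpow_of_nonneg _ _ hq, mul_sum]
  refine congrArg (· ^ q) (sum_congr rfl fun k hk => ?_)
  have hkn : k ≤ n := Nat.lt_succ_iff.mp (mem_range.mp hk)
  rw [← ENNReal.ofReal_mul (by positivity), ← ENNReal.ofReal_mul (by positivity), ← mul_assoc,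
    ← mul_assoc, ← Real.rpow_add two_pos, ← Real.rpow_add two_pos, Nat.cast_sub hkn]
  ring_nf

end SigmaNorm

theorem smoothS_sigmaNorm_one_lq_le_general {E : Type*} [AddCommGroup E] [Module ℝ E]
    (N : E → ℝ) (hN : IsPseudoNorm N) (r r' : ℝ) (hrr' : r < r')
    (q : ℝ) (hq : 1 ≤ q) (f : ℕ → E) :
    (∑' n : ℕ, ENNReal.ofReal ((2 : ℝ) ^ (-(q * (n : ℝ) * (r' - r)))) *
        sigmaNorm N r' 1 (smoothS n f) ^ q) ^ (1 / q)
      ≤ ENNReal.ofReal (1 / (1 - (2 : ℝ) ^ (r - r'))) *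
          sigmaNorm N r (ENNReal.ofReal q) f := by
  have hN0 : N 0 = 0 := (hN.eq_zero_iff 0).mpr rfl
  have hq₀ : 0 < q := by linarith
  rw [tsum_congr (two_rpow_mul_sigmaNorm_one_smoothS_rpow N r f hN0 hq₀.le),
    sigmaNorm_ofReal N r f hq₀.le, ← neg_sub r' r,
    ← tsum_ofReal_two_rpow_neg_mul (sub_pos.mpr hrr')]
  calc _ ≤ ((∑' j : ℕ, ENNReal.ofReal (2 ^ (-(j * (r' - r))))) ^ q *
          ∑' k : ℕ, ENNReal.ofReal (2 ^ ((k : ℝ) * r) * N (f k)) ^ q) ^ (1 / q) :=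
        ENNReal.rpow_le_rpow (ENNReal.tsum_rpow_sum_range_mul_le _ _ hq) (by positivity)
    _ = _ := by
        rw [ENNReal.mul_rpow_of_nonneg _ _ (by positivity), ← ENNReal.rpow_mul,
          mul_one_div_cancel hq₀.ne', ENNReal.rpow_one]

/-- Lemma 3.6 (ii): for `r < r'`, `q ∈ [1,∞)` and `f ∈ Σ^r_q(E)`,
`(∑_n 2^{-qn(r'-r)} ‖S_n f‖_{Σ^{r'}_1}^q)^{1/q} ≤ (1/(1-2^{r-r'})) ‖f‖_{Σ^r_q}`. -/
theorem smoothS_sigmaNorm_one_lq_le {E : Type*} [AddCommGroup E] [Module ℝ E]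
    (N : E → ℝ) (hN : IsPseudoNorm N) (r r' : ℝ) (hrr' : r < r')
    (q : ℝ) (hq : 1 ≤ q) (f : ℕ → E) (hf : memSigma N r (ENNReal.ofReal q) f) :
    (∑' n : ℕ, ENNReal.ofReal ((2 : ℝ) ^ (-(q * (n : ℝ) * (r' - r)))) *
        sigmaNorm N r' 1 (smoothS n f) ^ q) ^ (1 / q)
      ≤ ENNReal.ofReal (1 / (1 - (2 : ℝ) ^ (r - r'))) *
          sigmaNorm N r (ENNReal.ofReal q) f :=
  smoothS_sigmaNorm_one_lq_le_general N hN r r' hrr' q hq f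
end
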